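/- Let B be a bicategory and W a class of 1-morphisms satisfying [WB1]–[WB5]. Suppose a : B → A and b : C → B are 1-morphisms such that both a ∈ W and a ∘ b ∈ W. Then there exists a 1-morphism c : D → C such that b ∘ c ∈ W. -/

import Mathlib

open CategoryTheory Bicategory

universe w v u

/-- A class of 1-morphisms in a bicategory. -/
def WClass (B : Type u) [Bicategory.{w, v} B] :=
  ∀ ⦃a b : B⦄, (a ⟶ b) → Prop

namespace WClass

variable {B : Type u} [Bicategory.{w, v} B]

/-- [WB1]: all identities are in `W`. -/
def WB1 (W : WClass B) : Prop := ∀ a : B, W (𝟙 a)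

/-- [WB2]: for composable arrows of `W` there is a pre-composition landing in `W`. -/
def WB2 (W : WClass B) : Prop :=
  ∀ ⦃a b c : B⦄ (vm : a ⟶ b) (wm : b ⟶ c), W vm → W wm →
    ∃ (a' : B) (u : a' ⟶ a), W (u ≫ vm ≫ wm)

/-- [WB3]: squares with invertible fillers over cospans with one leg in `W`. -/
def WB3 (W : WClass B) : Prop :=
  ∀ ⦃a b c : B⦄ (wm : a ⟶ b) (f : c ⟶ b), W wm →
    ∃ (d : B) (h : d ⟶ a) (vm : d ⟶ c), W vm ∧ Nonempty (h ≫ wm ≅ vm ≫ f)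

/-- `β` is a lifting of the 2-cell `η : f ≫ wm ⟶ g ≫ wm` along `wm`, via `u`. -/
def IsLift ⦃a b c : B⦄ (f g : a ⟶ b) (wm : b ⟶ c) (η : f ≫ wm ⟶ g ≫ wm)
    ⦃a' : B⦄ (u : a' ⟶ a) (β : u ≫ f ⟶ u ≫ g) : Prop :=
  β ▷ wm = (α_ u f wm).hom ≫ u ◁ η ≫ (α_ u g wm).inv

/-- [WB4]: existence of liftings of 2-cells along arrows of `W`, together with
the compatibility of any two such liftings. -/
def WB4 (W : WClass B) : Prop :=
  (∀ ⦃a b c : B⦄ (f g : a ⟶ b) (wm : b ⟶ c), W wm → ∀ η : f ≫ wm ⟶ g ≫ wm,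
    ∃ (a' : B) (u : a' ⟶ a), W u ∧ ∃ β : u ≫ f ⟶ u ≫ g, IsLift f g wm η u β) ∧
  (∀ ⦃a b c : B⦄ (f g : a ⟶ b) (wm : b ⟶ c), W wm → ∀ η : f ≫ wm ⟶ g ≫ wm,
    ∀ ⦃a₁ : B⦄ (u₁ : a₁ ⟶ a) (β₁ : u₁ ≫ f ⟶ u₁ ≫ g), W u₁ → IsLift f g wm η u₁ β₁ →
      ∀ ⦃a₂ : B⦄ (u₂ : a₂ ⟶ a) (β₂ : u₂ ≫ f ⟶ u₂ ≫ g), W u₂ → IsLift f g wm η u₂ β₂ →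
        ∃ (d : B) (s : d ⟶ a₁) (t : d ⟶ a₂), W (s ≫ u₁) ∧ W (t ≫ u₂) ∧
          ∃ ε₀ : s ≫ u₁ ≅ t ≫ u₂,
            ((α_ s u₁ f).hom ≫ s ◁ β₁ ≫ (α_ s u₁ g).inv) ≫ ε₀.hom ▷ g =
              ε₀.hom ▷ f ≫ (α_ t u₂ f).hom ≫ t ◁ β₂ ≫ (α_ t u₂ g).inv)

/-- [WB5]: `W` is closed under invertible 2-cells. -/
def WB5 (W : WClass B) : Prop :=
  ∀ ⦃a b : B⦄ (vm wm : a ⟶ b), W wm → Nonempty (vm ≅ wm) → W vm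

end WClass

/-!
By [WB3] there is `φ : h ≫ b ≫ a ≅ v ≫ a` with `v ∈ W`, an invertible 2-cell between
`(h ≫ b) ≫ a` and `v ≫ a`. Its two components lift along `a ∈ W` by [WB4] to 2-cells `γ`, `γ'`
over a common `r ∈ W`. Their composites lift identities, so comparing them with the identity lift
through the compatibility clause of [WB4] makes first `γ ≫ γ'` and then `γ' ≫ γ` identities after
further restriction. This gives `u ∈ W` with `u ≫ h ≫ b ≅ u ≫ v`; by [WB2] some `m ≫ u ≫ v` is in
`W`, hence so is `m ≫ u ≫ h ≫ b` by [WB5].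
-/

section Restrict

variable {B : Type u} [Bicategory.{w, v} B]

def restrictCell {x y z c : B} (m : x ⟶ y) (u : y ⟶ z) {f g : z ⟶ c}
    (β : u ≫ f ⟶ u ≫ g) : (m ≫ u) ≫ f ⟶ (m ≫ u) ≫ g :=
  (α_ m u f).hom ≫ m ◁ β ≫ (α_ m u g).inv

lemma restrictCell_comp {x y z c : B} (m : x ⟶ y) (u : y ⟶ z) {f g k : z ⟶ c}
    (β : u ≫ f ⟶ u ≫ g) (β' : u ≫ g ⟶ u ≫ k) :
    restrictCell m u (β ≫ β') = restrictCell m u β ≫ restrictCell m u β' := by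
  simp [restrictCell]

lemma restrictCell_id {x y z c : B} (m : x ⟶ y) (u : y ⟶ z) (f : z ⟶ c) :
    restrictCell m u (𝟙 (u ≫ f)) = 𝟙 ((m ≫ u) ≫ f) := by
  simp [restrictCell]

end Restrict

namespace WClass

variable {B : Type u} [Bicategory.{w, v} B]

section IsLift

variable {a b c : B} {f g k : a ⟶ b} {wm : b ⟶ c}

lemma IsLift.restrict {η : f ≫ wm ⟶ g ≫ wm} {y : B} {u : y ⟶ a} {β : u ≫ f ⟶ u ≫ g}
    (hβ : IsLift f g wm η u β) {x : B} (m : x ⟶ y) :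
    IsLift f g wm η (m ≫ u) (restrictCell m u β) := by
  unfold IsLift restrictCell at *
  simp [whisker_assoc, hβ]

lemma IsLift.transport {η : f ≫ wm ⟶ g ≫ wm} {y : B} {u' u : y ⟶ a} {β : u ≫ f ⟶ u ≫ g}
    (hβ : IsLift f g wm η u β) (e : u' ≅ u) :
    IsLift f g wm η u' (e.hom ▷ f ≫ β ≫ e.inv ▷ g) := by
  unfold IsLift at *
  simp only [comp_whiskerRight, hβ, Category.assoc]
  rw [associator_naturality_left_assoc, ← whisker_exchange_assoc]
  simp [← comp_whiskerRight]

lemma IsLift.comp {η : f ≫ wm ⟶ g ≫ wm} {θ : g ≫ wm ⟶ k ≫ wm} {y : B} {u : y ⟶ a}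
    {β : u ≫ f ⟶ u ≫ g} {β' : u ≫ g ⟶ u ≫ k}
    (hβ : IsLift f g wm η u β) (hβ' : IsLift g k wm θ u β') :
    IsLift f k wm (η ≫ θ) u (β ≫ β') := by
  unfold IsLift at *
  simp [hβ, hβ']

lemma isLift_id (f : a ⟶ b) (wm : b ⟶ c) {y : B} (u : y ⟶ a) :
    IsLift f f wm (𝟙 (f ≫ wm)) u (𝟙 (u ≫ f)) := by
  simp [IsLift]

end IsLift

variable {W : WClass B}

lemma exists_common_refinement {a b c : B} {u₁ : b ⟶ a} {u₂ : c ⟶ a}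
    (h2 : W.WB2) (h3 : W.WB3) (h5 : W.WB5) (hu₁ : W u₁) (hu₂ : W u₂) :
    ∃ (x : B) (k : x ⟶ b) (l : x ⟶ c), W (k ≫ u₁) ∧ Nonempty (k ≫ u₁ ≅ l ≫ u₂) := by
  obtain ⟨d, k, l, hl, ⟨ψ⟩⟩ := h3 u₁ u₂ hu₁
  obtain ⟨x, m, hm⟩ := h2 l u₂ hl hu₂
  refine ⟨x, m ≫ k, m ≫ l, h5 _ _ hm ⟨?_⟩, ⟨?_⟩⟩
  · exact α_ m k u₁ ≪≫ whiskerLeftIso m ψ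
  · exact α_ m k u₁ ≪≫ whiskerLeftIso m ψ ≪≫ (α_ m l u₂).symm

lemma exists_common_lift (h2 : W.WB2) (h3 : W.WB3) (h5 : W.WB5)
    {a b c : B} {f g f' g' : a ⟶ b} {wm : b ⟶ c}
    {η : f ≫ wm ⟶ g ≫ wm} {θ : f' ≫ wm ⟶ g' ≫ wm}
    {y₁ : B} {u₁ : y₁ ⟶ a} {β₁ : u₁ ≫ f ⟶ u₁ ≫ g} (hu₁ : W u₁) (hβ₁ : IsLift f g wm η u₁ β₁)
    {y₂ : B} {u₂ : y₂ ⟶ a} {β₂ : u₂ ≫ f' ⟶ u₂ ≫ g'} (hu₂ : W u₂)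
    (hβ₂ : IsLift f' g' wm θ u₂ β₂) :
    ∃ (x : B) (r : x ⟶ a), W r ∧ (∃ γ, IsLift f g wm η r γ) ∧ ∃ γ', IsLift f' g' wm θ r γ' := by
  obtain ⟨x, k, l, hr, ⟨ψ⟩⟩ := exists_common_refinement h2 h3 h5 hu₁ hu₂
  exact ⟨x, k ≫ u₁, hr, ⟨_, hβ₁.restrict k⟩, ⟨_, (hβ₂.restrict l).transport ψ⟩⟩

lemma exists_restrictCell_eq_id (h1 : W.WB1) (h4 : W.WB4)
    {a b c : B} {f : a ⟶ b} {wm : b ⟶ c} (hw : W wm)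
    {x : B} {u : x ⟶ a} {γ : u ≫ f ⟶ u ≫ f} (hu : W u)
    (hγ : IsLift f f wm (𝟙 (f ≫ wm)) u γ) :
    ∃ (y : B) (s : y ⟶ x), W (s ≫ u) ∧ restrictCell s u γ = 𝟙 ((s ≫ u) ≫ f) := by
  obtain ⟨d, s, t, hsu, -, ε₀, hε₀⟩ :=
    h4.2 f f wm hw _ u γ hu hγ (𝟙 a) (𝟙 _) (h1 a) (isLift_id f wm (𝟙 a))
  refine ⟨d, s, hsu, (cancel_mono (ε₀.hom ▷ f)).1 ?_⟩
  simpa [restrictCell] using hε₀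

lemma exists_iso_restrict_of_iso_comp (h1 : W.WB1) (h2 : W.WB2) (h3 : W.WB3) (h4 : W.WB4)
    (h5 : W.WB5) {a b c : B} (f g : a ⟶ b) {wm : b ⟶ c} (hw : W wm) (η : f ≫ wm ≅ g ≫ wm) :
    ∃ (x : B) (u : x ⟶ a), W u ∧ Nonempty (u ≫ f ≅ u ≫ g) := by
  obtain ⟨_, _, hu₁, _, hβ₁⟩ := h4.1 f g wm hw η.hom
  obtain ⟨_, _, hu₂, _, hβ₂⟩ := h4.1 g f wm hw η.inv
  obtain ⟨x, r, hr, ⟨γ, hγ⟩, ⟨γ', hγ'⟩⟩ := exists_common_lift h2 h3 h5 hu₁ hβ₁ hu₂ hβ₂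
  have hγγ' : IsLift f f wm (𝟙 _) r (γ ≫ γ') := by simpa using hγ.comp hγ'
  obtain ⟨y, s, hs, hs_id⟩ := exists_restrictCell_eq_id h1 h4 hw hr hγγ'
  have hδ'δ : IsLift g g wm (𝟙 _) (s ≫ r) (restrictCell s r γ' ≫ restrictCell s r γ) := by
    simpa using (hγ'.restrict s).comp (hγ.restrict s)
  obtain ⟨z, t, ht, ht_id⟩ := exists_restrictCell_eq_id h1 h4 hw hs hδ'δ
  refine ⟨z, t ≫ s ≫ r, ht, ⟨⟨restrictCell t _ (restrictCell s r γ),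
    restrictCell t _ (restrictCell s r γ'), ?_, ?_⟩⟩⟩
  · rw [← restrictCell_comp, ← restrictCell_comp, hs_id, restrictCell_id]
  · rw [← restrictCell_comp, ht_id]

end WClass

theorem statement3 {B : Type u} [Bicategory.{w, v} B] (W : WClass B)
    (h1 : W.WB1) (h2 : W.WB2) (h3 : W.WB3) (h4 : W.WB4) (h5 : W.WB5)
    {A' B' C' : B} (a : B' ⟶ A') (bm : C' ⟶ B')
    (ha : W a) (hab : W (bm ≫ a)) :
    ∃ (D' : B) (cm : D' ⟶ C'), W (cm ≫ bm) := by
  obtain ⟨d, h, vm, hvm, ⟨φ⟩⟩ := h3 (bm ≫ a) a hab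
  obtain ⟨x, u, hu, ⟨ψ⟩⟩ :=
    WClass.exists_iso_restrict_of_iso_comp h1 h2 h3 h4 h5 (h ≫ bm) vm ha (α_ h bm a ≪≫ φ)
  obtain ⟨y, m, hm⟩ := h2 u vm hu hvm
  exact ⟨y, m ≫ u ≫ h, h5 _ _ hm ⟨α_ m (u ≫ h) bm ≪≫ whiskerLeftIso m (α_ u h bm ≪≫ ψ)⟩⟩
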